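/- Let y₁^ε and y₂^ε be two classical solutions of the penalized problem with initial data y₀¹ and y₀² respectively, and set z = y₁^ε − y₂^ε. Then for all t ≥ 0: ‖z(t)‖² + β₁ e^{−2γt} ∫₀ᵗ e^{2γs} ‖z_x(s)‖² ds + (ν/ε) e^{−2γt} ∫₀ᵗ e^{2γs} (z(s,1))² ds ≤ e^{−2γt} ‖y₀¹ − y₀²‖², where β₁ = 2ν − γ − α − 2νr²/(3ε) ≥ 0 under Assumption (A1). In particular, if y₀¹ = y₀², then z ≡ 0, so classical solutions of the penalized problem are unique. -/

import Mathlib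

open MeasureTheory intervalIntegral Real

/-- `L²(0,1)` norm squared: `‖v‖² = ∫₀¹ v(x)² dx`. -/
noncomputable def L2sq (v : ℝ → ℝ) : ℝ := ∫ x in (0:ℝ)..1, (v x)^2

/-- `L⁴(0,1)` norm to the fourth power: `‖v‖_{L⁴}⁴ = ∫₀¹ v(x)⁴ dx`. -/
noncomputable def L4q (v : ℝ → ℝ) : ℝ := ∫ x in (0:ℝ)..1, (v x)^4

/-- Weighted inner product `(x, v) = ∫₀¹ x v(x) dx`. -/
noncomputable def xInner (v : ℝ → ℝ) : ℝ := ∫ x in (0:ℝ)..1, x * v x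

/-- Sobolev `H^k(0,1)` norm squared: `‖v‖_k² = Σ_{i=0}^{k} ∫₀¹ (∂ₓⁱ v)² dx`. -/
noncomputable def HkSq (k : ℕ) (v : ℝ → ℝ) : ℝ :=
  ∑ i ∈ Finset.range (k+1), ∫ x in (0:ℝ)..1, (iteratedDeriv i v x)^2

/-- Spatial derivative `y_x(t, ·)`. -/
noncomputable def dx (y : ℝ → ℝ → ℝ) (t : ℝ) : ℝ → ℝ := deriv (y t)

/-- Second spatial derivative `y_{xx}(t, ·)`. -/
noncomputable def dxx (y : ℝ → ℝ → ℝ) (t : ℝ) : ℝ → ℝ := iteratedDeriv 2 (y t)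

/-- Time derivative `y_t(t, ·)`. -/
noncomputable def dt1 (y : ℝ → ℝ → ℝ) (t : ℝ) : ℝ → ℝ := fun x => deriv (fun s => y s x) t

/-- Second time derivative `y_{tt}(t, ·)`. -/
noncomputable def dtt (y : ℝ → ℝ → ℝ) (t : ℝ) : ℝ → ℝ := fun x => iteratedDeriv 2 (fun s => y s x) t

/-- Mixed derivative `y_{xt}(t, ·)`. -/
noncomputable def dxt (y : ℝ → ℝ → ℝ) (t : ℝ) : ℝ → ℝ := deriv (dt1 y t)

/-- Mixed derivative `y_{xxt}(t, ·)`. -/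
noncomputable def dxxt (y : ℝ → ℝ → ℝ) (t : ℝ) : ℝ → ℝ := iteratedDeriv 2 (dt1 y t)

section PCDAux

open Set

variable {g : ℝ → ℝ → ℝ} (hg : ContDiff ℝ (⊤ : ℕ∞) (Function.uncurry g))
include hg

lemma pcd_hasDerivAt_t (t x : ℝ) :
    HasDerivAt (fun s => g s x) (fderiv ℝ (Function.uncurry g) (t, x) (1, 0)) t := by
  have h1 : HasFDerivAt (Function.uncurry g) (fderiv ℝ (Function.uncurry g) (t, x)) (t, x) :=
    (hg.differentiable (by simp) (t, x)).hasFDerivAt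
  have h2 : HasDerivAt (fun s : ℝ => (s, x)) ((1 : ℝ), (0 : ℝ)) t :=
    (hasDerivAt_id t).prodMk (hasDerivAt_const t x)
  exact h1.comp_hasDerivAt t h2

lemma pcd_hasDerivAt_x (t x : ℝ) :
    HasDerivAt (g t) (fderiv ℝ (Function.uncurry g) (t, x) (0, 1)) x := by
  have h1 : HasFDerivAt (Function.uncurry g) (fderiv ℝ (Function.uncurry g) (t, x)) (t, x) :=
    (hg.differentiable (by simp) (t, x)).hasFDerivAt
  have h2 : HasDerivAt (fun s : ℝ => (t, s)) ((0 : ℝ), (1 : ℝ)) x :=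
    (hasDerivAt_const x t).prodMk (hasDerivAt_id x)
  exact h1.comp_hasDerivAt x h2

lemma pcd_dt1_eq (t x : ℝ) : dt1 g t x = fderiv ℝ (Function.uncurry g) (t, x) (1, 0) :=
  (pcd_hasDerivAt_t hg t x).deriv

lemma pcd_dx_eq (t x : ℝ) : dx g t x = fderiv ℝ (Function.uncurry g) (t, x) (0, 1) :=
  (pcd_hasDerivAt_x hg t x).deriv

lemma pcd_hasDerivAt_t' (t x : ℝ) : HasDerivAt (fun s => g s x) (dt1 g t x) t := by
  rw [pcd_dt1_eq hg]; exact pcd_hasDerivAt_t hg t x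

lemma pcd_hasDerivAt_x' (t x : ℝ) : HasDerivAt (g t) (dx g t x) x := by
  rw [pcd_dx_eq hg]; exact pcd_hasDerivAt_x hg t x

lemma pcd_cont_fderiv (v : ℝ × ℝ) :
    Continuous fun p : ℝ × ℝ => fderiv ℝ (Function.uncurry g) p v :=
  ((hg.fderiv_right (m := (⊤ : ℕ∞)) le_rfl).continuous).clm_apply continuous_const

lemma pcd_cont_dt1 : Continuous fun p : ℝ × ℝ => dt1 g p.1 p.2 := by
  refine (pcd_cont_fderiv hg ((1:ℝ), (0:ℝ))).congr fun p => ?_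
  rw [pcd_dt1_eq hg]

lemma pcd_cont_dx : Continuous fun p : ℝ × ℝ => dx g p.1 p.2 := by
  refine (pcd_cont_fderiv hg ((0:ℝ), (1:ℝ))).congr fun p => ?_
  rw [pcd_dx_eq hg]

lemma pcd_slice (t : ℝ) : ContDiff ℝ (⊤ : ℕ∞) (g t) := by
  have : g t = (Function.uncurry g) ∘ (fun x => (t, x)) := rfl
  rw [this]
  exact hg.comp (contDiff_const.prodMk contDiff_id)

lemma pcd_energy (t₀ : ℝ) :
    HasDerivAt (fun t => ∫ x in (0:ℝ)..1, (g t x) ^ 2)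
      (∫ x in (0:ℝ)..1, 2 * g t₀ x * dt1 g t₀ x) t₀ := by
  have hFc : Continuous fun p : ℝ × ℝ => 2 * g p.1 p.2 * dt1 g p.1 p.2 :=
    (continuous_const.mul hg.continuous).mul (pcd_cont_dt1 hg)
  obtain ⟨C, hC⟩ : ∃ C, ∀ p ∈ (Icc (t₀ - 1) (t₀ + 1) ×ˢ Icc (0:ℝ) 1),
      ‖2 * g p.1 p.2 * dt1 g p.1 p.2‖ ≤ C :=
    (isCompact_Icc.prod isCompact_Icc).exists_bound_of_continuousOn hFc.continuousOn
  have main := intervalIntegral.hasDerivAt_integral_of_dominated_loc_of_deriv_le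
      (F := fun t x => (g t x) ^ 2) (F' := fun t x => 2 * g t x * dt1 g t x)
      (μ := volume) (a := (0:ℝ)) (b := 1) (x₀ := t₀) (bound := fun _ => C) (s := Metric.ball t₀ 1) (Metric.ball_mem_nhds t₀ one_pos)
      (Filter.Eventually.of_forall fun t =>
        (((pcd_slice hg t).continuous.pow 2)).aestronglyMeasurable)
      (((pcd_slice hg t₀).continuous.pow 2).intervalIntegrable 0 1)
      ((hFc.comp (continuous_const.prodMk continuous_id)).aestronglyMeasurable)
      (Filter.Eventually.of_forall fun x hx t ht => by
        have hx' : x ∈ Icc (0:ℝ) 1 := by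
          rw [Set.uIoc_of_le (by norm_num : (0:ℝ) ≤ 1)] at hx
          exact ⟨le_of_lt hx.1, hx.2⟩
        have ht' : t ∈ Icc (t₀ - 1) (t₀ + 1) := by
          have := Metric.mem_ball.mp ht
          rw [Real.dist_eq] at this
          constructor <;> [linarith [abs_lt.mp this |>.1]; linarith [abs_lt.mp this |>.2]]
        exact hC (t, x) ⟨ht', hx'⟩)
      (Continuous.intervalIntegrable continuous_const 0 1)
      (Filter.Eventually.of_forall fun x _ t _ => by
        have h : HasDerivAt (fun s => g s x ^ 2) _ t := (pcd_hasDerivAt_t' hg t x).pow 2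
        simpa [mul_comm, mul_assoc, mul_left_comm] using h)
  exact main.2

end PCDAux

lemma pcd_deriv_smooth {f : ℝ → ℝ} (hf : ContDiff ℝ (⊤ : ℕ∞) f) : ContDiff ℝ (⊤ : ℕ∞) (deriv f) :=
  (hf.of_le (by simp)).iterate_deriv 1

lemma pcd_cs_interval {u : ℝ → ℝ} (hu : Continuous u) {x : ℝ} (hx : 0 ≤ x) :
    (∫ s in (0:ℝ)..x, u s) ^ 2 ≤ x * ∫ s in (0:ℝ)..x, (u s) ^ 2 := by
  rcases eq_or_lt_of_le hx with rfl | hx'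
  · simp
  · set I := ∫ s in (0:ℝ)..x, u s with hI
    set c := I / x with hc
    have h0 : (0:ℝ) ≤ ∫ s in (0:ℝ)..x, (u s - c) ^ 2 :=
      intervalIntegral.integral_nonneg hx fun s _ => sq_nonneg _
    have hexp : ∫ s in (0:ℝ)..x, (u s - c) ^ 2
        = (∫ s in (0:ℝ)..x, (u s) ^ 2) - 2 * c * I + c ^ 2 * x := by
      have h1 : ∀ s, (u s - c) ^ 2 = (u s) ^ 2 - 2 * c * u s + c ^ 2 := by intro s; ring
      simp_rw [h1]
      rw [intervalIntegral.integral_add (show IntervalIntegrable (fun s => u s ^ 2 - 2 * c * u s) volume 0 x from ((hu.pow 2).sub ((continuous_const.mul hu))).intervalIntegrable 0 x)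
            (continuous_const.intervalIntegrable 0 x),
          intervalIntegral.integral_sub (show IntervalIntegrable (fun s => u s ^ 2) volume 0 x from (hu.pow 2).intervalIntegrable 0 x)
            (show IntervalIntegrable (fun s => 2 * c * u s) volume 0 x from (continuous_const.mul hu).intervalIntegrable 0 x),
          intervalIntegral.integral_const_mul, intervalIntegral.integral_const]
      simp [← hI]
      ring
    rw [hexp] at h0
    have hcx : c * x = I := by
      rw [hc]; field_simp
    nlinarith [mul_nonneg h0 hx, hcx, sq_nonneg (c * x)]

lemma pcd_cs_xinner {v : ℝ → ℝ} (hv : Continuous v) :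
    (∫ s in (0:ℝ)..1, s * v s) ^ 2 ≤ (1/3) * ∫ s in (0:ℝ)..1, (v s) ^ 2 := by
  set I := ∫ s in (0:ℝ)..1, s * v s with hI
  have h0 : (0:ℝ) ≤ ∫ s in (0:ℝ)..1, (v s - 3 * I * s) ^ 2 :=
    intervalIntegral.integral_nonneg zero_le_one fun s _ => sq_nonneg _
  have hexp : ∫ s in (0:ℝ)..1, (v s - 3 * I * s) ^ 2
      = (∫ s in (0:ℝ)..1, (v s) ^ 2) - 6 * I * I + 9 * I ^ 2 * (1/3) := by
    have h1 : ∀ s, (v s - 3 * I * s) ^ 2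
        = (v s) ^ 2 - (6 * I) * (s * v s) + (9 * I ^ 2) * s ^ 2 := by intro s; ring
    simp_rw [h1]
    rw [intervalIntegral.integral_add
          (show IntervalIntegrable (fun s => (v s) ^ 2 - (6 * I) * (s * v s)) volume 0 1 from
            (((hv.pow 2).sub (continuous_const.mul (continuous_id.mul hv))).intervalIntegrable 0 1))
          (show IntervalIntegrable (fun s => (9 * I ^ 2) * s ^ 2) volume 0 1 from
            ((continuous_const.mul (continuous_pow 2)).intervalIntegrable 0 1)),
        intervalIntegral.integral_sub (show IntervalIntegrable (fun s => v s ^ 2) volume 0 1 from (hv.pow 2).intervalIntegrable 0 1)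
          (show IntervalIntegrable (fun s => (6 * I) * (s * v s)) volume 0 1 from
            ((continuous_const.mul (continuous_id.mul hv)).intervalIntegrable 0 1)),
        intervalIntegral.integral_const_mul, intervalIntegral.integral_const_mul,
        integral_pow]
    norm_num [← hI]
  rw [hexp] at h0
  nlinarith [h0]

lemma pcd_poincare {v : ℝ → ℝ} (hv : ContDiff ℝ (⊤ : ℕ∞) v) (h0 : v 0 = 0) :
    (∫ s in (0:ℝ)..1, (v s) ^ 2) ≤ (1/2) * ∫ s in (0:ℝ)..1, (deriv v s) ^ 2 := by
  have hd : Continuous (deriv v) := hv.continuous_deriv (by simp)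
  have hB : ∀ x ∈ Set.Icc (0:ℝ) 1, (v x) ^ 2 ≤ x * ∫ s in (0:ℝ)..1, (deriv v s) ^ 2 := by
    intro x hx
    have hftc : ∫ s in (0:ℝ)..x, deriv v s = v x - v 0 :=
      intervalIntegral.integral_deriv_eq_sub
        (fun s _ => (hv.differentiable (by simp)).differentiableAt) (hd.intervalIntegrable 0 x)
    have h1 : (v x) ^ 2 ≤ x * ∫ s in (0:ℝ)..x, (deriv v s) ^ 2 := by
      have := pcd_cs_interval hd hx.1
      rwa [hftc, h0, sub_zero] at this
    refine h1.trans ?_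
    have h2 : (∫ s in (0:ℝ)..x, (deriv v s) ^ 2) ≤ ∫ s in (0:ℝ)..1, (deriv v s) ^ 2 := by
      apply intervalIntegral.integral_mono_interval (le_refl (0:ℝ)) hx.1 hx.2
      · filter_upwards with s using sq_nonneg _
      · exact (hd.pow 2).intervalIntegrable 0 1
    nlinarith [hx.1, h2]
  calc (∫ s in (0:ℝ)..1, (v s) ^ 2)
      ≤ ∫ s in (0:ℝ)..1, s * ∫ u in (0:ℝ)..1, (deriv v u) ^ 2 := by
        apply intervalIntegral.integral_mono_on zero_le_one
          (((hv.continuous).pow 2).intervalIntegrable 0 1)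
          ((continuous_id.mul continuous_const).intervalIntegrable 0 1)
        exact hB
    _ = (1/2) * ∫ s in (0:ℝ)..1, (deriv v s) ^ 2 := by
        rw [intervalIntegral.integral_mul_const]
        have : ∫ s in (0:ℝ)..1, s = 1/2 := by simp
        rw [this]
lemma pcd_alg (ν α γ ε r A Zx E z1 d X : ℝ)
    (hν : 0 < ν) (hZx0 : 0 ≤ Zx)
    (hB : ε * (2 * ν * (z1 * d)) ≤ ν * (-z1 ^ 2 + r ^ 2 * X ^ 2))
    (hAε : ε * A ≤ ε * (2 * ν * (z1 * d - Zx) + 2 * α * E))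
    (p1 : ν * r ^ 2 * X ^ 2 ≤ ν * r ^ 2 * (1 / 3 * E))
    (p2 : (ν * r ^ 2 / 3 + (2 * α + 2 * γ) * ε) * E
      ≤ (ν * r ^ 2 / 3 + (2 * α + 2 * γ) * ε) * (1 / 2 * Zx)) :
    ε * A + 2 * γ * ε * E + (ε * (2 * ν - γ - α) - 2 * ν * r ^ 2 / 3) * Zx + ν * z1 ^ 2 ≤ 0 := by
  linarith [mul_nonneg (mul_nonneg hν.le (sq_nonneg r)) hZx0]

lemma pcd_one_le_top : (1 : WithTop ℕ∞) ≤ ((⊤ : ℕ∞) : WithTop ℕ∞) := by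
  exact_mod_cast le_top

theorem penalized_continuous_dependence_uniqueness
    (ν α δ r γ ε : ℝ) (w₁ w₂ : ℝ → ℝ → ℝ)
    (hν : 0 < ν) (hα : 0 < α) (hδ : 0 < δ) (hr0 : 0 < r) (hε : 0 < ε)
    -- w₁, w₂ : smooth classical solutions of the penalized problem
    (hsmooth₁ : ContDiff ℝ (⊤ : ℕ∞) (Function.uncurry w₁))
    (hsmooth₂ : ContDiff ℝ (⊤ : ℕ∞) (Function.uncurry w₂))
    (hpde₁ : ∀ t > (0:ℝ), ∀ x ∈ Set.Ioo (0:ℝ) 1,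
      dt1 w₁ t x = ν * dxx w₁ t x + α * w₁ t x - δ * (w₁ t x)^3)
    (hpde₂ : ∀ t > (0:ℝ), ∀ x ∈ Set.Ioo (0:ℝ) 1,
      dt1 w₂ t x = ν * dxx w₂ t x + α * w₂ t x - δ * (w₂ t x)^3)
    (hbc0₁ : ∀ t ≥ (0:ℝ), w₁ t 0 = 0)
    (hbc0₂ : ∀ t ≥ (0:ℝ), w₂ t 0 = 0)
    (hrobin₁ : ∀ t > (0:ℝ), ε * dx w₁ t 1 + w₁ t 1 = -r * xInner (w₁ t))
    (hrobin₂ : ∀ t > (0:ℝ), ε * dx w₂ t 1 + w₂ t 1 = -r * xInner (w₂ t))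
    -- Assumption (A1)
    (hA1a : r^2 < 3*ε)
    (hA1b : α / ν ≤ 2 * (3*ε - r^2) / (3*ε))
    (hγ0 : 0 < γ) (hγ : γ ≤ 2*ν - 2*ν*r^2/(3*ε) - α) :
    0 ≤ 2*ν - γ - α - 2*ν*r^2/(3*ε) ∧
    (∀ t ≥ (0:ℝ),
      L2sq (fun x => w₁ t x - w₂ t x)
        + (2*ν - γ - α - 2*ν*r^2/(3*ε)) * Real.exp (-2*γ*t)
          * (∫ s in (0:ℝ)..t, Real.exp (2*γ*s) * L2sq (dx (fun τ ξ => w₁ τ ξ - w₂ τ ξ) s))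
        + (ν/ε) * Real.exp (-2*γ*t)
          * (∫ s in (0:ℝ)..t, Real.exp (2*γ*s) * (w₁ s 1 - w₂ s 1)^2)
      ≤ Real.exp (-2*γ*t) * L2sq (fun x => w₁ 0 x - w₂ 0 x)) ∧
    ((∀ x, w₁ 0 x = w₂ 0 x) → ∀ t ≥ (0:ℝ), ∀ x ∈ Set.Icc (0:ℝ) 1, w₁ t x = w₂ t x) := by
  set z : ℝ → ℝ → ℝ := fun τ ξ => w₁ τ ξ - w₂ τ ξ with hzdef
  have hz : ContDiff ℝ (⊤ : ℕ∞) (Function.uncurry z) := hsmooth₁.sub hsmooth₂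
  have hz_slice : ∀ t, ContDiff ℝ (⊤ : ℕ∞) (z t) := pcd_slice hz
  have hw₁s : ∀ t, ContDiff ℝ (⊤ : ℕ∞) (w₁ t) := pcd_slice hsmooth₁
  have hw₂s : ∀ t, ContDiff ℝ (⊤ : ℕ∞) (w₂ t) := pcd_slice hsmooth₂
  set β₁ : ℝ := 2*ν - γ - α - 2*ν*r^2/(3*ε) with hβ₁
  set E : ℝ → ℝ := fun t => ∫ x in (0:ℝ)..1, (z t x)^2 with hEdef
  set Zx : ℝ → ℝ := fun t => ∫ x in (0:ℝ)..1, (dx z t x)^2 with hZxdef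
  have hpart1 : 0 ≤ β₁ := by rw [hβ₁]; linarith [hγ]
  have hE' : ∀ t, HasDerivAt E (∫ x in (0:ℝ)..1, 2 * z t x * dt1 z t x) t :=
    fun t => pcd_energy hz t
  have hE0 : ∀ t, 0 ≤ E t := fun t =>
    intervalIntegral.integral_nonneg zero_le_one fun x _ => sq_nonneg _
  have hZx0 : ∀ t, 0 ≤ Zx t := fun t =>
    intervalIntegral.integral_nonneg zero_le_one fun x _ => sq_nonneg _
  -- the key differential inequality
  have hkey : ∀ t, 0 < t →
      (∫ x in (0:ℝ)..1, 2 * z t x * dt1 z t x)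
        + 2*γ*E t + β₁*Zx t + ν/ε*(z t 1)^2 ≤ 0 := by
    intro t ht
    have hzt0 : z t 0 = 0 := by
      show w₁ t 0 - w₂ t 0 = 0
      rw [hbc0₁ t ht.le, hbc0₂ t ht.le]; ring
    have hzx_cd : ContDiff ℝ (⊤ : ℕ∞) (dx z t) := pcd_deriv_smooth (hz_slice t)
    have hcont_zx : Continuous (dx z t) := hzx_cd.continuous
    have hcont_zxx : Continuous (deriv (dx z t)) := hzx_cd.continuous_deriv pcd_one_le_top
    have hcont_zt : Continuous fun x => dt1 z t x :=
      (pcd_cont_dt1 hz).comp (continuous_const.prodMk continuous_id)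
    -- PDE for z
    have hpde_z : ∀ x ∈ Set.Ioo (0:ℝ) 1,
        dt1 z t x = ν * deriv (dx z t) x + α * z t x - δ * ((w₁ t x)^3 - (w₂ t x)^3) := by
      intro x hx
      have h₁ := hpde₁ t ht x hx
      have h₂ := hpde₂ t ht x hx
      have hdt : dt1 z t x = dt1 w₁ t x - dt1 w₂ t x :=
        ((pcd_hasDerivAt_t' hsmooth₁ t x).sub (pcd_hasDerivAt_t' hsmooth₂ t x)).deriv
      have hdxx : deriv (dx z t) x = dxx w₁ t x - dxx w₂ t x := by
        have e1 : dx z t = fun ξ => deriv (w₁ t) ξ - deriv (w₂ t) ξ := by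
          funext ξ
          exact deriv_sub ((hw₁s t).differentiable (by simp) ξ) ((hw₂s t).differentiable (by simp) ξ)
        rw [e1, deriv_fun_sub ((pcd_deriv_smooth (hw₁s t)).differentiable (by simp) x)
          ((pcd_deriv_smooth (hw₂s t)).differentiable (by simp) x)]
        simp [dxx, iteratedDeriv_succ, iteratedDeriv_one, dx]
      rw [hdt, hdxx, h₁, h₂]
      show _ = _
      ring
    -- integral inequality from the PDE
    have hIneq1 : (∫ x in (0:ℝ)..1, 2 * z t x * dt1 z t x)
        ≤ ∫ x in (0:ℝ)..1, ((2*ν) * (z t x * deriv (dx z t) x) + (2*α) * (z t x)^2) := by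
      apply intervalIntegral.integral_mono_ae_restrict zero_le_one
        (((continuous_const.mul (hz_slice t).continuous).mul hcont_zt).intervalIntegrable 0 1)
        (((continuous_const.mul ((hz_slice t).continuous.mul hcont_zxx)).add
          (continuous_const.mul ((hz_slice t).continuous.pow 2))).intervalIntegrable 0 1)
      rw [Measure.restrict_congr_set (Ioo_ae_eq_Icc (a := (0:ℝ)) (b := (1:ℝ))).symm]
      filter_upwards [ae_restrict_mem measurableSet_Ioo] with x hx
      have hpx := hpde_z x hx
      have hz_eq : z t x = w₁ t x - w₂ t x := rfl
      have hq0 : 0 ≤ (w₁ t x)^2 + w₁ t x * w₂ t x + (w₂ t x)^2 := by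
        nlinarith [sq_nonneg (w₁ t x + w₂ t x), sq_nonneg (w₁ t x), sq_nonneg (w₂ t x)]
      have hq : 0 ≤ δ * ((w₁ t x - w₂ t x)^2 * ((w₁ t x)^2 + w₁ t x * w₂ t x + (w₂ t x)^2)) :=
        mul_nonneg hδ.le (mul_nonneg (sq_nonneg _) hq0)
      show 2 * z t x * dt1 z t x ≤ 2 * ν * (z t x * deriv (dx z t) x) + 2 * α * (z t x)^2
      rw [hpx, hz_eq]
      nlinarith [hq]
    have hsplit : (∫ x in (0:ℝ)..1, ((2*ν) * (z t x * deriv (dx z t) x) + (2*α) * (z t x)^2))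
        = (2*ν) * (∫ x in (0:ℝ)..1, z t x * deriv (dx z t) x) + (2*α) * E t := by
      rw [intervalIntegral.integral_add
          (show IntervalIntegrable (fun x => (2*ν) * (z t x * deriv (dx z t) x)) volume 0 1 from
            (continuous_const.mul ((hz_slice t).continuous.mul hcont_zxx)).intervalIntegrable 0 1)
          (show IntervalIntegrable (fun x => (2*α) * (z t x)^2) volume 0 1 from
            (continuous_const.mul ((hz_slice t).continuous.pow 2)).intervalIntegrable 0 1),
        intervalIntegral.integral_const_mul, intervalIntegral.integral_const_mul]
    -- integration by parts
    have hIBP : (∫ x in (0:ℝ)..1, z t x * deriv (dx z t) x) = z t 1 * dx z t 1 - Zx t := by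
      have hparts := intervalIntegral.integral_mul_deriv_eq_deriv_mul
        (a := (0:ℝ)) (b := 1) (u := z t) (v := dx z t) (u' := dx z t) (v' := deriv (dx z t))
        (fun x _ => pcd_hasDerivAt_x' hz t x)
        (fun x _ => (hzx_cd.differentiable (by simp) x).hasDerivAt)
        (hcont_zx.intervalIntegrable 0 1)
        (hcont_zxx.intervalIntegrable 0 1)
      have hzz : (∫ x in (0:ℝ)..1, dx z t x * dx z t x) = Zx t := by
        show (∫ x in (0:ℝ)..1, dx z t x * dx z t x) = ∫ x in (0:ℝ)..1, (dx z t x)^2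
        apply intervalIntegral.integral_congr
        intro x _
        exact (pow_two _).symm
      rw [hparts, hzt0, hzz]
      ring
    -- Robin boundary condition for z
    have hrobin_z : ε * dx z t 1 + z t 1 = -r * (∫ x in (0:ℝ)..1, x * z t x) := by
      have h1 := hrobin₁ t ht
      have h2 := hrobin₂ t ht
      have hdxsub : dx z t 1 = dx w₁ t 1 - dx w₂ t 1 :=
        deriv_sub ((hw₁s t).differentiable (by simp) 1) ((hw₂s t).differentiable (by simp) 1)
      have hz1 : z t 1 = w₁ t 1 - w₂ t 1 := rfl
      have hXsub : (∫ x in (0:ℝ)..1, x * z t x) = xInner (w₁ t) - xInner (w₂ t) := by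
        rw [xInner, xInner, ← intervalIntegral.integral_sub
          (show IntervalIntegrable (fun x => x * w₁ t x) volume 0 1 from
            (continuous_id.mul (hw₁s t).continuous).intervalIntegrable 0 1)
          (show IntervalIntegrable (fun x => x * w₂ t x) volume 0 1 from
            (continuous_id.mul (hw₂s t).continuous).intervalIntegrable 0 1)]
        apply intervalIntegral.integral_congr
        intro x _
        show x * (w₁ t x - w₂ t x) = x * w₁ t x - x * w₂ t x
        ring
      rw [hdxsub, hz1, hXsub]
      linarith [h1, h2]
    -- Cauchy-Schwarz and Poincaré
    have hX2 : (∫ x in (0:ℝ)..1, x * z t x)^2 ≤ (1/3) * E t :=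
      pcd_cs_xinner (hz_slice t).continuous
    have hP : E t ≤ (1/2) * Zx t := pcd_poincare (hz_slice t) hzt0
    -- assemble
    set X : ℝ := ∫ x in (0:ℝ)..1, x * z t x with hXdef
    have hA : (∫ x in (0:ℝ)..1, 2 * z t x * dt1 z t x)
        ≤ (2*ν) * (z t 1 * dx z t 1 - Zx t) + (2*α) * E t := by
      calc (∫ x in (0:ℝ)..1, 2 * z t x * dt1 z t x)
          ≤ ∫ x in (0:ℝ)..1, ((2*ν) * (z t x * deriv (dx z t) x) + (2*α) * (z t x)^2) := hIneq1
        _ = (2*ν) * (∫ x in (0:ℝ)..1, z t x * deriv (dx z t) x) + (2*α) * E t := hsplit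
        _ = (2*ν) * (z t 1 * dx z t 1 - Zx t) + (2*α) * E t := by rw [hIBP]
    have hB : ε * (2*ν*(z t 1 * dx z t 1)) ≤ ν * (-(z t 1)^2 + r^2 * X^2) := by
      have h2 : ε * dx z t 1 = -(z t 1) - r*X := by linarith [hrobin_z]
      have h3 : ε * (2*ν*(z t 1 * dx z t 1)) = 2*ν*(z t 1 * (ε * dx z t 1)) := by ring
      rw [h3, h2]
      nlinarith [mul_nonneg hν.le (sq_nonneg (z t 1 + r * X))]
    have hAε : ε * (∫ x in (0:ℝ)..1, 2 * z t x * dt1 z t x)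
        ≤ ε * ((2*ν) * (z t 1 * dx z t 1 - Zx t) + (2*α) * E t) :=
      mul_le_mul_of_nonneg_left hA hε.le
    have hfinal : ε * (∫ x in (0:ℝ)..1, 2 * z t x * dt1 z t x)
        + 2*γ*ε*E t + (ε*(2*ν - γ - α) - 2*ν*r^2/3) * Zx t + ν*(z t 1)^2 ≤ 0 := by
      have p1 : (ν*r^2) * X^2 ≤ (ν*r^2) * ((1/3) * E t) :=
        mul_le_mul_of_nonneg_left hX2 (by positivity)
      have p2 : (ν*r^2/3 + (2*α+2*γ)*ε) * E t ≤ (ν*r^2/3 + (2*α+2*γ)*ε) * ((1/2) * Zx t) :=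
        mul_le_mul_of_nonneg_left hP (by positivity)
      exact pcd_alg ν α γ ε r _ (Zx t) (E t) (z t 1) (dx z t 1) X hν (hZx0 t) hB hAε p1 p2
    have hrw : (∫ x in (0:ℝ)..1, 2 * z t x * dt1 z t x) + 2*γ*E t + β₁*Zx t + ν/ε*(z t 1)^2
        = (1/ε) * (ε * (∫ x in (0:ℝ)..1, 2 * z t x * dt1 z t x)
          + 2*γ*ε*E t + (ε*(2*ν - γ - α) - 2*ν*r^2/3) * Zx t + ν*(z t 1)^2) := by
      rw [hβ₁]; field_simp
    rw [hrw]
    have h1ε : (0:ℝ) ≤ 1/ε := by positivity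
    exact mul_nonpos_iff.mpr (Or.inl ⟨h1ε, hfinal⟩)
  -- continuity of the auxiliary integrands
  have hZxCont : Continuous Zx := by
    have hc : Continuous (Function.uncurry fun t x => (dx z t x)^2) := (pcd_cont_dx hz).pow 2
    exact intervalIntegral.continuous_parametric_intervalIntegral_of_continuous'
      (μ := volume) hc 0 1
  have hz1c : Continuous fun s => (z s 1)^2 :=
    (hz.continuous.comp (continuous_id.prodMk continuous_const)).pow 2
  have hg1 : Continuous fun s => Real.exp (2*γ*s) :=
    Real.continuous_exp.comp (continuous_const.mul continuous_id)
  set I1 : ℝ → ℝ := fun u => ∫ s in (0:ℝ)..u, Real.exp (2*γ*s) * Zx s with hI1def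
  set I2 : ℝ → ℝ := fun u => ∫ s in (0:ℝ)..u, Real.exp (2*γ*s) * (z s 1)^2 with hI2def
  have hI1' : ∀ u, HasDerivAt I1 (Real.exp (2*γ*u) * Zx u) u := fun u =>
    ((hg1.mul hZxCont).integral_hasStrictDerivAt 0 u).hasDerivAt
  have hI2' : ∀ u, HasDerivAt I2 (Real.exp (2*γ*u) * (z u 1)^2) u := fun u =>
    ((hg1.mul hz1c).integral_hasStrictDerivAt 0 u).hasDerivAt
  have hexp' : ∀ u, HasDerivAt (fun v => Real.exp (2*γ*v)) (2*γ*Real.exp (2*γ*u)) u := by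
    intro u
    have h0 : HasDerivAt (fun v : ℝ => 2*γ*v) (2*γ) u := by
      simpa using (hasDerivAt_id u).const_mul (2*γ)
    have h := h0.exp
    convert h using 1
    ring
  set G : ℝ → ℝ := fun u => Real.exp (2*γ*u) * E u + β₁ * I1 u + ν/ε * I2 u with hGdef
  have hG' : ∀ u, HasDerivAt G (Real.exp (2*γ*u) * ((∫ x in (0:ℝ)..1, 2 * z u x * dt1 z u x)
      + 2*γ*E u + β₁*Zx u + ν/ε*(z u 1)^2)) u := by
    intro u
    have h1 := (hexp' u).fun_mul (hE' u)
    have h2 := (hI1' u).const_mul β₁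
    have h3 := (hI2' u).const_mul (ν/ε)
    have h := (h1.fun_add h2).fun_add h3
    refine h.congr_deriv ?_
    ring
  have hGdiff : Differentiable ℝ G := fun s => (hG' s).differentiableAt
  have hGanti : AntitoneOn G (Set.Ici 0) := by
    apply antitoneOn_of_deriv_nonpos (convex_Ici 0) hGdiff.continuous.continuousOn
      (fun s _ => (hGdiff s).differentiableWithinAt)
    intro s hs
    rw [interior_Ici] at hs
    rw [(hG' s).deriv]
    exact mul_nonpos_iff.mpr (Or.inl ⟨(Real.exp_pos _).le, hkey s hs⟩)
  have hG0 : G 0 = E 0 := by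
    show Real.exp (2*γ*0) * E 0 + β₁ * I1 0 + ν/ε * I2 0 = E 0
    rw [hI1def, hI2def]
    simp [intervalIntegral.integral_same]
  -- main estimate
  have hmain : ∀ t, 0 ≤ t →
      E t + β₁ * Real.exp (-2*γ*t) * I1 t + ν/ε * Real.exp (-2*γ*t) * I2 t
        ≤ Real.exp (-2*γ*t) * E 0 := by
    intro t ht
    have hGt : G t ≤ G 0 := hGanti Set.self_mem_Ici ht ht
    have hmul := mul_le_mul_of_nonneg_left hGt (Real.exp_nonneg (-2*γ*t))
    have h1 : Real.exp (-2*γ*t) * Real.exp (2*γ*t) = 1 := by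
      have he : (-2*γ*t + 2*γ*t) = 0 := by ring
      rw [← Real.exp_add, he, Real.exp_zero]
    have hexpand : Real.exp (-2*γ*t) * G t
        = E t + β₁ * Real.exp (-2*γ*t) * I1 t + ν/ε * Real.exp (-2*γ*t) * I2 t := by
      show Real.exp (-2*γ*t) * (Real.exp (2*γ*t) * E t + β₁ * I1 t + ν/ε * I2 t) = _
      linear_combination E t * h1
    calc E t + β₁ * Real.exp (-2*γ*t) * I1 t + ν/ε * Real.exp (-2*γ*t) * I2 t
        = Real.exp (-2*γ*t) * G t := hexpand.symm
      _ ≤ Real.exp (-2*γ*t) * G 0 := hmul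
      _ = Real.exp (-2*γ*t) * E 0 := by rw [hG0]
  refine ⟨hpart1, ?_, ?_⟩
  · -- part 2
    intro t ht
    show E t + β₁ * Real.exp (-2*γ*t) * I1 t + ν/ε * Real.exp (-2*γ*t) * I2 t
      ≤ Real.exp (-2*γ*t) * E 0
    exact hmain t ht
  · -- part 3 : uniqueness
    intro h00 t ht x hx
    have hE00 : E 0 = 0 := by
      have hz0 : ∀ y, z 0 y = 0 := by
        intro y
        show w₁ 0 y - w₂ 0 y = 0
        rw [h00 y]; ring
      show (∫ y in (0:ℝ)..1, (z 0 y)^2) = 0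
      simp [hz0]
    have hI1n : 0 ≤ I1 t := by
      apply intervalIntegral.integral_nonneg ht
      intro s _
      exact mul_nonneg (Real.exp_nonneg _) (hZx0 s)
    have hI2n : 0 ≤ I2 t := by
      apply intervalIntegral.integral_nonneg ht
      intro s _
      exact mul_nonneg (Real.exp_nonneg _) (sq_nonneg _)
    have hEt0 : E t = 0 := by
      have h5 := hmain t ht
      rw [hE00, mul_zero] at h5
      have q1 : 0 ≤ β₁ * Real.exp (-2*γ*t) * I1 t :=
        mul_nonneg (mul_nonneg hpart1 (Real.exp_nonneg _)) hI1n
      have q2 : 0 ≤ ν/ε * Real.exp (-2*γ*t) * I2 t :=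
        mul_nonneg (mul_nonneg (by positivity) (Real.exp_nonneg _)) hI2n
      have h7 := hE0 t
      revert h5 q1 q2 h7
      generalize E t = Et
      generalize β₁ * Real.exp (-2*γ*t) * I1 t = Q1
      generalize ν/ε * Real.exp (-2*γ*t) * I2 t = Q2
      intro h5 q1 q2 h7
      linarith
    by_contra hne
    have hzx : z t x ≠ 0 := sub_ne_zero.mpr hne
    have hfc : Continuous fun y => (z t y)^2 := (hz_slice t).continuous.pow 2
    have hfx : 0 < (z t x)^2 :=
      lt_of_le_of_ne (sq_nonneg _) (Ne.symm (pow_ne_zero 2 hzx))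
    have hU : IsOpen {y | 0 < (z t y)^2} := isOpen_lt continuous_const hfc
    have hxcl : x ∈ closure (Set.Ioo (0:ℝ) 1) := by
      rw [closure_Ioo (by norm_num : (0:ℝ) ≠ 1)]
      exact hx
    obtain ⟨y, hyU, hyI⟩ := mem_closure_iff.mp hxcl _ hU hfx
    have hpos : 0 < ∫ y in (0:ℝ)..1, (z t y)^2 := by
      rw [intervalIntegral.integral_pos_iff_support_of_nonneg_ae
        (Filter.Eventually.of_forall fun y => sq_nonneg _) (hfc.intervalIntegrable 0 1)]
      refine ⟨zero_lt_one, ?_⟩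
      have hsub : {y | 0 < (z t y)^2} ∩ Set.Ioo 0 1
          ⊆ (Function.support fun y => (z t y)^2) ∩ Set.Ioc 0 1 := by
        rintro y ⟨hy1, hy2⟩
        exact ⟨ne_of_gt hy1, Set.Ioo_subset_Ioc_self hy2⟩
      refine lt_of_lt_of_le ?_ (measure_mono hsub)
      exact (hU.inter isOpen_Ioo).measure_pos volume ⟨y, hyU, hyI⟩
    have hpos' : 0 < E t := hpos
    linarith
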